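/- arXiv:0705.1709 — 4 statements merged into one kernel-verified Lean document; each statement's English description precedes it below -/
import Mathlib

section
/- Let N be a free abelian group of rank n, let k_1,...,k_d ∈ N generate N, let I ⊆ {1,...,d}, and set k'_i = -k_i for i ∈ I and k'_i = k_i otherwise. Consider the quotient groups A = Z^d / {(⟨μ,k_1⟩,...,⟨μ,k_d⟩) : μ ∈ Hom(N,Z)} and A' = Z^d / {(⟨μ,k'_1⟩,...,⟨μ,k'_d⟩) : μ ∈ Hom(N,Z)}. Then the affine map φ_I : Z^d → Z^d sending (a_i) to (a'_i) with a'_i = -(a_i + 1) for i ∈ I and a'_i = a_i otherwise descends to a well-defined bijection A → A'. -/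
/-- Let `N` be free abelian of rank `n`, `k_1,…,k_d` generators of `N`,
`I ⊆ {1,…,d}` and `k'_i = -k_i` for `i ∈ I`, `k'_i = k_i` otherwise.  Let
`A = ℤ^d / {(⟨μ,k_i⟩)_i}` and `A' = ℤ^d / {(⟨μ,k'_i⟩)_i}`.  Then the affine
map `φ_I : (a_i) ↦ (a'_i)`, with `a'_i = -(a_i+1)` for `i ∈ I` and
`a'_i = a_i` otherwise, descends to a well-defined bijection `A → A'`. -/
theorem reflection_divisor_class_bijection (n d : ℕ) (N : Type*) [AddCommGroup N]
    [Module ℤ N] [Module.Free ℤ N] [Module.Finite ℤ N]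
    (hrank : Module.finrank ℤ N = n)
    (k : Fin d → N) (hk : Submodule.span ℤ (Set.range k) = ⊤)
    (I : Finset (Fin d)) (k' : Fin d → N)
    (hk' : ∀ i, k' i = if i ∈ I then - k i else k i)
    (L L' : AddSubgroup (Fin d → ℤ))
    (hL : ∀ c, c ∈ L ↔ ∃ μ : N →ₗ[ℤ] ℤ, c = fun i => μ (k i))
    (hL' : ∀ c, c ∈ L' ↔ ∃ μ : N →ₗ[ℤ] ℤ, c = fun i => μ (k' i))
    (φ : (Fin d → ℤ) → (Fin d → ℤ))
    (hφ : ∀ a i, φ a i = if i ∈ I then -(a i + 1) else a i) :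
    -- well-definedness on classes
    (∀ a b : Fin d → ℤ, a - b ∈ L → φ a - φ b ∈ L') ∧
    -- the induced map on the quotients is a bijection
    ∃ ψ : (Fin d → ℤ) ⧸ L ≃ (Fin d → ℤ) ⧸ L',
      ∀ a : Fin d → ℤ,
        ψ (QuotientAddGroup.mk a) = QuotientAddGroup.mk (φ a) := by

  have inv : ∀ a, φ (φ a) = a := by
    intro a; funext i; rw [hφ, hφ]
    by_cases h : i ∈ I <;> simp [h] <;> ring
  have key : ∀ a b : Fin d → ℤ, a - b ∈ L → φ a - φ b ∈ L' := by
    intro a b hab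
    rw [hL] at hab
    obtain ⟨μ, hμ⟩ := hab
    rw [hL']
    refine ⟨μ, funext fun i => ?_⟩
    have := congrFun hμ i
    simp only [Pi.sub_apply] at this ⊢
    rw [hφ, hφ, hk']
    by_cases h : i ∈ I <;> simp [h, this] <;> ring_nf <;> omega
  have key' : ∀ a b : Fin d → ℤ, a - b ∈ L' → φ a - φ b ∈ L := by
    intro a b hab
    rw [hL'] at hab
    obtain ⟨μ, hμ⟩ := hab
    rw [hL]
    refine ⟨μ, funext fun i => ?_⟩
    have := congrFun hμ i
    simp only [Pi.sub_apply] at this ⊢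
    rw [hφ, hφ]
    rw [hk'] at this
    by_cases h : i ∈ I <;> simp [h] at this ⊢ <;> omega
  refine ⟨key, ?_⟩
  have resp : ∀ a b : Fin d → ℤ, (QuotientAddGroup.leftRel L) a b →
      (QuotientAddGroup.leftRel L') (φ a) (φ b) := by
    intro a b hab
    rw [QuotientAddGroup.leftRel_apply] at hab ⊢
    have := key b a (by simpa [neg_add_eq_sub] using hab)
    simpa [neg_add_eq_sub] using this
  have resp' : ∀ a b : Fin d → ℤ, (QuotientAddGroup.leftRel L') a b →
      (QuotientAddGroup.leftRel L) (φ a) (φ b) := by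
    intro a b hab
    rw [QuotientAddGroup.leftRel_apply] at hab ⊢
    have := key' b a (by simpa [neg_add_eq_sub] using hab)
    simpa [neg_add_eq_sub] using this
  refine ⟨⟨Quotient.map' φ resp, Quotient.map' φ resp', ?_, ?_⟩, fun a => rfl⟩
  · intro x
    induction x using QuotientAddGroup.induction_on with
    | _ a => show Quotient.map' φ resp' (Quotient.map' φ resp _) = _
             simp only [Quotient.map'_mk'']
             exact congrArg _ (inv a)
  · intro x
    induction x using QuotientAddGroup.induction_on with
    | _ a => show Quotient.map' φ resp (Quotient.map' φ resp' _) = _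
             simp only [Quotient.map'_mk'']
             exact congrArg _ (inv a)
end

section
/- Let n ≥ 2 and 0 ≤ r ≤ n. In the polynomial ring C[Q_1,...,Q_{n+1}], define differential operators e_i for i = 1,...,n by e_i = -∂_i Q_{i+1} (i.e., f ↦ -∂_i(Q_{i+1} f)) if i < r, e_i = ∂_i ∂_{i+1} if i = r, and e_i = Q_i ∂_{i+1} if i > r, where ∂_i = ∂/∂Q_i. Then a monomial Q^ν with all ν_i ≥ 0 satisfies e_i · Q^ν = 0 for all i = 1,...,n if and only if Q^ν is a power of Q_r or a power of Q_{r+1} (including the constant monomial 1). -/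
open MvPolynomial

/-- Classification of primitive monomials: in `ℂ[Q_1,…,Q_{n+1}]` (variables
indexed by `Fin (n+1)`, index `j` corresponding to `Q_{j+1}`), define for
`i = 1,…,n` (0-based `j : Fin n`, `i = j+1`) the operators
`e_i = -∂_i Q_{i+1}` if `i < r`, `e_i = ∂_i ∂_{i+1}` if `i = r`, and
`e_i = Q_i ∂_{i+1}` if `i > r`.  A monomial `Q^ν` is annihilated by all `e_i`
iff it is a power of `Q_r` or a power of `Q_{r+1}`. -/
theorem primitive_monomials (n : ℕ) (hn : 2 ≤ n) (r : ℕ) (hr : r ≤ n)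
    (e : Fin n → MvPolynomial (Fin (n + 1)) ℂ → MvPolynomial (Fin (n + 1)) ℂ)
    (he : ∀ j f, e j f =
      if (j : ℕ) + 1 < r then -(pderiv j.castSucc (X j.succ * f))
      else if (j : ℕ) + 1 = r then pderiv j.castSucc (pderiv j.succ f)
      else X j.castSucc * pderiv j.succ f)
    (ν : Fin (n + 1) →₀ ℕ) :
    (∀ j : Fin n, e j (monomial ν (1 : ℂ)) = 0) ↔
      ((1 ≤ r ∧ ∃ k : ℕ, ν = Finsupp.single (⟨r - 1, by omega⟩ : Fin (n + 1)) k) ∨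
        (∃ k : ℕ, ν = Finsupp.single (⟨r, by omega⟩ : Fin (n + 1)) k)) := by
  have hcond : ∀ j : Fin n, (e j (monomial ν (1 : ℂ)) = 0 ↔
      if (j : ℕ) + 1 < r then ν j.castSucc = 0
      else if (j : ℕ) + 1 = r then ν j.castSucc = 0 ∨ ν j.succ = 0
      else ν j.succ = 0) := by
    intro j
    have h : (j.castSucc : Fin (n + 1)) ≠ j.succ := (Fin.castSucc_lt_succ : j.castSucc < j.succ).ne
    rw [he]
    split_ifs with h1 h2
    · simp [X, monomial_mul, pderiv_monomial, Finsupp.single_apply, h.symm]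
    · simp [pderiv_monomial, Finsupp.tsub_apply, Finsupp.single_apply, h.symm, or_comm]
    · simp [pderiv_monomial, X, monomial_mul]
  constructor
  · intro H
    have Hc := fun j => (hcond j).mp (H j)
    have hlow : ∀ i : Fin (n + 1), (i : ℕ) + 1 < r → ν i = 0 := by
      intro i hi
      have hin : (i : ℕ) < n := by omega
      have := Hc ⟨(i : ℕ), hin⟩
      rw [if_pos hi] at this
      rwa [show (⟨(i : ℕ), hin⟩ : Fin n).castSucc = i from Fin.ext rfl] at this
    have hhigh : ∀ i : Fin (n + 1), r < (i : ℕ) → ν i = 0 := by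
      intro i hi
      have hin : (i : ℕ) - 1 < n := by omega
      have := Hc ⟨(i : ℕ) - 1, hin⟩
      rw [if_neg (by simp; omega), if_neg (by simp; omega)] at this
      rwa [show (⟨(i : ℕ) - 1, hin⟩ : Fin n).succ = i from Fin.ext (by simp; omega)] at this
    rcases Nat.eq_zero_or_pos r with hr0 | hr1
    · right
      refine ⟨ν ⟨r, by omega⟩, Finsupp.ext fun i => ?_⟩
      rcases eq_or_ne i ⟨r, by omega⟩ with rfl | hne
      · simp
      · rw [Finsupp.single_eq_of_ne' (Ne.symm hne)]
        have hne' : (i : ℕ) ≠ r := fun h => hne (Fin.ext (by simpa using h))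
        exact hhigh i (by omega)
    · have := Hc ⟨r - 1, by omega⟩
      rw [if_neg (by simp only [Fin.val_mk]; omega), if_pos (by simp only [Fin.val_mk]; omega)] at this
      rw [show (⟨r - 1, by omega⟩ : Fin n).castSucc = ⟨r - 1, by omega⟩ from Fin.ext rfl,
        show (⟨r - 1, by omega⟩ : Fin n).succ = ⟨r, by omega⟩ from Fin.ext (by simp; omega)] at this
      rcases this with h0 | h0
      · right
        refine ⟨ν ⟨r, by omega⟩, Finsupp.ext fun i => ?_⟩
        rcases eq_or_ne i ⟨r, by omega⟩ with rfl | hne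
        · simp
        · rw [Finsupp.single_eq_of_ne' (Ne.symm hne)]
          have hne' : (i : ℕ) ≠ r := fun h => hne (Fin.ext (by simpa using h))
          rcases Nat.lt_or_ge (i : ℕ) r with hi | hi
          · rcases Nat.lt_or_ge ((i : ℕ) + 1) r with hi2 | hi2
            · exact hlow i hi2
            · have : i = (⟨r - 1, by omega⟩ : Fin (n + 1)) := Fin.ext (by simp; omega)
              rw [this]; exact h0
          · exact hhigh i (by omega)
      · left
        refine ⟨hr1, ν ⟨r - 1, by omega⟩, Finsupp.ext fun i => ?_⟩
        rcases eq_or_ne i ⟨r - 1, by omega⟩ with rfl | hne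
        · simp
        · rw [Finsupp.single_eq_of_ne' (Ne.symm hne)]
          have hne' : (i : ℕ) ≠ r - 1 := fun h => hne (Fin.ext (by simpa using h))
          rcases Nat.lt_or_ge (i : ℕ) r with hi | hi
          · exact hlow i (by omega)
          · rcases Nat.eq_or_lt_of_le hi with hi2 | hi2
            · have : i = (⟨r, by omega⟩ : Fin (n + 1)) := Fin.ext (by simp; omega)
              rw [this]; exact h0
            · exact hhigh i hi2
  · have key : ∀ (p : Fin (n + 1)) (k : ℕ) (q : Fin (n + 1)), (p : ℕ) ≠ (q : ℕ) →
        Finsupp.single p k q = 0 := fun p k q h =>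
      Finsupp.single_eq_of_ne' (fun hpq => h (congrArg Fin.val hpq))
    rintro (⟨hr1, k, rfl⟩ | ⟨k, rfl⟩) <;> intro j <;> rw [hcond] <;> split_ifs with h1 h2
    · exact key _ _ _ (by simp only [Fin.val_mk, Fin.coe_castSucc]; omega)
    · exact Or.inr (key _ _ _ (by simp only [Fin.val_mk, Fin.val_succ]; omega))
    · exact key _ _ _ (by simp only [Fin.val_mk, Fin.val_succ]; omega)
    · exact key _ _ _ (by simp only [Fin.val_mk, Fin.coe_castSucc]; omega)
    · exact Or.inl (key _ _ _ (by simp only [Fin.val_mk, Fin.coe_castSucc]; omega))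
    · exact key _ _ _ (by simp only [Fin.val_mk, Fin.val_succ]; omega)
end

section
/- Let n ≥ 2, 1 ≤ r ≤ n, and m ≥ 0. Consider the subalgebra D of the Weyl algebra A_{n+1} spanned by monomials Q^λ P^μ with λ, μ ∈ N^{n+1} and Σ_{i≤r}(λ_i - μ_i) = Σ_{i>r}(λ_i - μ_i). Then every monomial Q^ν with ν_i ≥ 0 and Σ_{i>r}ν_i - Σ_{i≤r}ν_i = m can be obtained by applying an element of D to Q_{r+1}^m; specifically, (1/m!) Q^ν P_{r+1}^m lies in D and sends Q_{r+1}^m to Q^ν. -/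
open MvPolynomial Finset

lemma iter_smul {σ : Type*} (i : σ) (k c : ℕ) (p : MvPolynomial σ ℂ) :
    (fun f => pderiv i f)^[k] (c • p) = c • (fun f => pderiv i f)^[k] p := by
  induction k generalizing p with
  | zero => simp
  | succ k ih =>
    rw [Function.iterate_succ_apply, Function.iterate_succ_apply, map_nsmul, ih]

lemma iter_pderiv_pow {σ : Type*} (i : σ) (m : ℕ) :
    (fun f => pderiv i f)^[m] ((X i : MvPolynomial σ ℂ) ^ m) = m.factorial := by
  induction m with
  | zero => simp
  | succ k ih =>
    rw [Function.iterate_succ_apply]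
    have h1 : pderiv i ((X i : MvPolynomial σ ℂ) ^ (k+1)) = (k+1) • (X i ^ k) := by
      rw [Derivation.leibniz_pow]
      simp [smul_smul, mul_comm]
    rw [h1, iter_smul, ih]
    push_cast [Nat.factorial_succ]
    ring

/-- Generation of global sections from the primitive vector: every monomial
`Q^ν` with `ν ≥ 0` and `Σ_{i>r} ν_i - Σ_{i≤r} ν_i = m` is obtained from
`Q_{r+1}^m` by applying the invariant operator `(1/m!) Q^ν P_{r+1}^m`: this
operator satisfies the invariance (weight) condition
`Σ_{i≤r}(λ_i-μ_i) = Σ_{i>r}(λ_i-μ_i)`, and it sends `Q_{r+1}^m` to `Q^ν`. -/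
theorem sections_generated_by_primitive (n : ℕ) (hn : 2 ≤ n) (r : ℕ)
    (hr1 : 1 ≤ r) (hr2 : r ≤ n) (m : ℕ) (ν : Fin (n + 1) →₀ ℕ)
    (hν : (∑ i ∈ univ.filter (fun i : Fin (n + 1) => r ≤ (i : ℕ)), (ν i : ℤ)) -
      (∑ i ∈ univ.filter (fun i : Fin (n + 1) => (i : ℕ) < r), (ν i : ℤ)) = m) :
    -- the operator `Q^ν P_{r+1}^m` satisfies the invariance condition
    (∑ i ∈ univ.filter (fun i : Fin (n + 1) => (i : ℕ) < r),
        ((ν i : ℤ) - if i = (⟨r, by omega⟩ : Fin (n + 1)) then (m : ℤ) else 0)) =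
      (∑ i ∈ univ.filter (fun i : Fin (n + 1) => r ≤ (i : ℕ)),
        ((ν i : ℤ) - if i = (⟨r, by omega⟩ : Fin (n + 1)) then (m : ℤ) else 0)) ∧
    -- `(1/m!) Q^ν P_{r+1}^m` sends `Q_{r+1}^m` to `Q^ν`
    ((m.factorial : ℂ)⁻¹ •
        (monomial ν (1 : ℂ) *
          (fun f => pderiv (⟨r, by omega⟩ : Fin (n + 1)) f)^[m]
            (X (⟨r, by omega⟩ : Fin (n + 1)) ^ m)) = monomial ν (1 : ℂ)) := by
  constructor
  · rw [Finset.sum_sub_distrib, Finset.sum_sub_distrib,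
      Finset.sum_ite_eq' _ (⟨r, by omega⟩ : Fin (n + 1)),
      Finset.sum_ite_eq' _ (⟨r, by omega⟩ : Fin (n + 1))]
    have h1 : (⟨r, by omega⟩ : Fin (n + 1)) ∉
        univ.filter (fun i : Fin (n + 1) => (i : ℕ) < r) := by simp
    have h2 : (⟨r, by omega⟩ : Fin (n + 1)) ∈
        univ.filter (fun i : Fin (n + 1) => r ≤ (i : ℕ)) := by simp
    rw [if_neg h1, if_pos h2]
    linarith
  · rw [iter_pderiv_pow]
    have hm : (m.factorial : ℂ) ≠ 0 := Nat.cast_ne_zero.mpr m.factorial_ne_zero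
    have : ((m.factorial : ℕ) : MvPolynomial (Fin (n + 1)) ℂ) =
        C (m.factorial : ℂ) := by simp [MvPolynomial.C_eq_coe_nat]
    rw [this, mul_comm, C_mul', smul_smul, inv_mul_cancel₀ hm, one_smul]
end

section
/- Let n ≥ 2 and 2 ≤ r ≤ n, and let ℓ ≥ 0, m = ℓ + r. Consider the set of Laurent monomials Q^ν in variables Q_1,...,Q_{n+1} with ν_i < 0 for i = 1,...,r, ν_i ≥ 0 for i = r+1,...,n+1, and Σ_{i≤r} ν_i + m = Σ_{i>r} ν_i. Acting by the operators e_i (e_i = -∂_i Q_{i+1} for i < r, e_i = ∂_i ∂_{i+1} for i = r, e_i = Q_i ∂_{i+1} for i > r) on the span of these monomials modulo monomials outside this set, the unique monomial (up to scalar) annihilated by all e_i is Q_1^{-ℓ-1} Q_2^{-1} ⋯ Q_r^{-1}. -/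
open Finset

private lemma sum_ind {n : ℕ} (s : Finset (Fin n)) (f : Fin n → ℤ) (a b : Fin n) (c d : ℤ) :
    ∑ t ∈ s, (f t + (if t = a then c else 0) + (if t = b then d else 0)) =
    (∑ t ∈ s, f t) + (if a ∈ s then c else 0) + (if b ∈ s then d else 0) := by
  simp [Finset.sum_add_distrib, Finset.sum_ite_eq']

/-- Primitive vector in `H^{r-1}`: among the Laurent monomials `Q^ν` with
`ν_i < 0` for `i ≤ r`, `ν_i ≥ 0` for `i > r` and `Σ_{i≤r} ν_i + m = Σ_{i>r} ν_i`
(`m = ℓ + r`, `ℓ ≥ 0`), the unique one killed by all operators `e_i`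
(`e_i = -∂_i Q_{i+1}` for `i < r`, `∂_i ∂_{i+1}` for `i = r`, `Q_i ∂_{i+1}`
for `i > r`), modulo monomials outside the set, is
`Q_1^{-ℓ-1} Q_2^{-1} ⋯ Q_r^{-1}`.  Each `e_i` maps the monomial `Q^ν` to
`coeff i ν · Q^{shift i ν}`; being killed modulo the set means that for each
`i` either the coefficient vanishes or the shifted exponent leaves the set. -/
theorem cohomology_primitive_vector (n : ℕ) (hn : 2 ≤ n) (r : ℕ) (hr1 : 2 ≤ r)
    (hr2 : r ≤ n) (ℓ : ℤ) (hℓ : 0 ≤ ℓ) (m : ℤ) (hm : m = ℓ + r)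
    (S : Set (Fin (n + 1) → ℤ))
    (hS : ∀ ν, ν ∈ S ↔
      (∀ i : Fin (n + 1), (i : ℕ) < r → ν i < 0) ∧
      (∀ i : Fin (n + 1), r ≤ (i : ℕ) → 0 ≤ ν i) ∧
      (∑ i ∈ univ.filter (fun i : Fin (n + 1) => (i : ℕ) < r), ν i) + m =
        ∑ i ∈ univ.filter (fun i : Fin (n + 1) => r ≤ (i : ℕ)), ν i)
    (coeff : Fin n → (Fin (n + 1) → ℤ) → ℤ)
    (hcoeff : ∀ j ν, coeff j ν =
      if (j : ℕ) + 1 < r then -(ν j.castSucc)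
      else if (j : ℕ) + 1 = r then ν j.castSucc * ν j.succ
      else ν j.succ)
    (shift : Fin n → (Fin (n + 1) → ℤ) → (Fin (n + 1) → ℤ))
    (hshift : ∀ j ν t, shift j ν t =
      if (j : ℕ) + 1 < r then
        ν t - (if t = j.castSucc then 1 else 0) + (if t = j.succ then 1 else 0)
      else if (j : ℕ) + 1 = r then
        ν t - (if t = j.castSucc then 1 else 0) - (if t = j.succ then 1 else 0)
      else
        ν t + (if t = j.castSucc then 1 else 0) - (if t = j.succ then 1 else 0))
    (ν : Fin (n + 1) → ℤ) (hν : ν ∈ S) :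
    (∀ j : Fin n, coeff j ν = 0 ∨ shift j ν ∉ S) ↔
      ν = fun i : Fin (n + 1) =>
        if (i : ℕ) = 0 then -ℓ - 1 else if (i : ℕ) < r then -1 else 0 := by
  obtain ⟨hneg, hpos, hsum⟩ := (hS ν).mp hν
  have hcs : ∀ j : Fin n, j.castSucc ≠ j.succ := fun j => (Fin.castSucc_lt_succ : j.castSucc < j.succ).ne
  constructor
  · intro hkill
    -- Step 1: ν i = 0 for r ≤ i
    have hzero : ∀ i : Fin (n + 1), r ≤ (i : ℕ) → ν i = 0 := by
      intro i hi
      rcases Nat.eq_or_lt_of_le hi with hi' | hi'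
      · -- i = r, use j = r - 1
        set j : Fin n := ⟨r - 1, by omega⟩ with hj
        have hjv : (j : ℕ) = r - 1 := rfl
        have hji : j.succ = i := by ext; simp [Fin.val_succ, hjv]; omega
        have hc1 : ¬ ((j : ℕ) + 1 < r) := by omega
        have hc2 : (j : ℕ) + 1 = r := by omega
        rcases hkill j with h | h
        · rw [hcoeff, if_neg hc1, if_pos hc2] at h
          rcases mul_eq_zero.mp h with h' | h'
          · exact absurd h' (by have := hneg j.castSucc (by simp [Fin.coe_castSucc, hjv]; omega); omega)
          · rw [hji] at h'; exact h'
        · by_contra hne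
          have h1 : 1 ≤ ν i := by have := hpos i hi; omega
          refine h ((hS _).mpr ?_)
          have hsh : ∀ t, shift j ν t =
              ν t + (if t = j.castSucc then -1 else 0) + (if t = j.succ then -1 else 0) := by
            intro t; rw [hshift, if_neg hc1, if_pos hc2]; split_ifs <;> ring
          refine ⟨?_, ?_, ?_⟩
          · intro t ht
            rw [hsh]
            have htb : t ≠ j.succ := by
              intro h'; rw [h', hji] at ht; omega
            have := hneg t ht
            split_ifs <;> omega
          · intro t ht
            rw [hsh]
            have hta : t ≠ j.castSucc := by
              intro h'; rw [h'] at ht; simp [Fin.coe_castSucc, hjv] at ht; omega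
            rcases eq_or_ne t j.succ with rfl | htb
            · rw [if_neg hta, if_pos rfl, hji]; omega
            · rw [if_neg hta, if_neg htb]; have := hpos t ht; omega
          · have e1 : ∑ t ∈ univ.filter (fun i : Fin (n + 1) => (i : ℕ) < r), shift j ν t =
                (∑ t ∈ univ.filter (fun i : Fin (n + 1) => (i : ℕ) < r), ν t) + (-1) := by
              rw [Finset.sum_congr rfl (fun t _ => hsh t), sum_ind,
                if_pos (by simp [Fin.coe_castSucc, hjv]; omega),
                if_neg (by simp [Fin.val_succ, hjv]; omega)]
              ring
            have e2 : ∑ t ∈ univ.filter (fun i : Fin (n + 1) => r ≤ (i : ℕ)), shift j ν t =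
                (∑ t ∈ univ.filter (fun i : Fin (n + 1) => r ≤ (i : ℕ)), ν t) + (-1) := by
              rw [Finset.sum_congr rfl (fun t _ => hsh t), sum_ind,
                if_neg (by simp [Fin.coe_castSucc, hjv]; omega),
                if_pos (by simp [Fin.val_succ, hjv]; omega)]
              ring
            rw [e1, e2]; omega
      · -- r < i, use j = i - 1
        have hilt : (i : ℕ) < n + 1 := i.isLt
        set j : Fin n := ⟨(i : ℕ) - 1, by omega⟩ with hj
        have hjv : (j : ℕ) = (i : ℕ) - 1 := rfl
        have hji : j.succ = i := by ext; simp [Fin.val_succ, hjv]; omega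
        have hc1 : ¬ ((j : ℕ) + 1 < r) := by omega
        have hc2 : ¬ ((j : ℕ) + 1 = r) := by omega
        rcases hkill j with h | h
        · rw [hcoeff, if_neg hc1, if_neg hc2, hji] at h; exact h
        · by_contra hne
          have h1 : 1 ≤ ν i := by have := hpos i hi; omega
          refine h ((hS _).mpr ?_)
          have hsh : ∀ t, shift j ν t =
              ν t + (if t = j.castSucc then 1 else 0) + (if t = j.succ then -1 else 0) := by
            intro t; rw [hshift, if_neg hc1, if_neg hc2]; split_ifs <;> ring
          refine ⟨?_, ?_, ?_⟩
          · intro t ht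
            rw [hsh]
            have hta : t ≠ j.castSucc := by
              intro h'; rw [h'] at ht; simp [Fin.coe_castSucc, hjv] at ht; omega
            have htb : t ≠ j.succ := by
              intro h'; rw [h', hji] at ht; omega
            rw [if_neg hta, if_neg htb]; have := hneg t ht; omega
          · intro t ht
            rw [hsh]
            rcases eq_or_ne t j.succ with rfl | htb
            · rw [if_neg (hcs j).symm, if_pos rfl, hji]
              omega
            · rcases eq_or_ne t j.castSucc with rfl | hta
              · rw [if_pos rfl, if_neg htb]; have := hpos _ ht; omega
              · rw [if_neg hta, if_neg htb]; have := hpos t ht; omega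
          · have e1 : ∑ t ∈ univ.filter (fun i : Fin (n + 1) => (i : ℕ) < r), shift j ν t =
                ∑ t ∈ univ.filter (fun i : Fin (n + 1) => (i : ℕ) < r), ν t := by
              rw [Finset.sum_congr rfl (fun t _ => hsh t), sum_ind,
                if_neg (by simp [Fin.coe_castSucc, hjv]; omega),
                if_neg (by simp [Fin.val_succ, hjv]; omega)]
              ring
            have e2 : ∑ t ∈ univ.filter (fun i : Fin (n + 1) => r ≤ (i : ℕ)), shift j ν t =
                ∑ t ∈ univ.filter (fun i : Fin (n + 1) => r ≤ (i : ℕ)), ν t := by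
              rw [Finset.sum_congr rfl (fun t _ => hsh t), sum_ind,
                if_pos (by simp [Fin.coe_castSucc, hjv]; omega),
                if_pos (by simp [Fin.val_succ, hjv]; omega)]
              ring
            rw [e1, e2]; exact hsum
    -- Step 2: sum over the right part is 0, so left sum = -m
    have hR : ∑ t ∈ univ.filter (fun i : Fin (n + 1) => r ≤ (i : ℕ)), ν t = 0 := by
      apply Finset.sum_eq_zero
      intro t ht
      simp only [Finset.mem_filter] at ht
      exact hzero t ht.2
    have hL : ∑ t ∈ univ.filter (fun i : Fin (n + 1) => (i : ℕ) < r), ν t = -m := by omega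
    -- Step 3: ν i = -1 for 1 ≤ i < r
    have hone : ∀ i : Fin (n + 1), 1 ≤ (i : ℕ) → (i : ℕ) < r → ν i = -1 := by
      intro i hi1 hir
      set j : Fin n := ⟨(i : ℕ) - 1, by omega⟩ with hj
      have hjv : (j : ℕ) = (i : ℕ) - 1 := rfl
      have hji : j.succ = i := by ext; simp [Fin.val_succ, hjv]; omega
      have hc1 : (j : ℕ) + 1 < r := by omega
      rcases hkill j with h | h
      · rw [hcoeff, if_pos hc1] at h
        have := hneg j.castSucc (by simp [Fin.coe_castSucc, hjv]; omega)
        omega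
      · by_contra hne
        have h1 : ν i ≤ -2 := by have := hneg i hir; omega
        refine h ((hS _).mpr ?_)
        have hsh : ∀ t, shift j ν t =
            ν t + (if t = j.castSucc then -1 else 0) + (if t = j.succ then 1 else 0) := by
          intro t; rw [hshift, if_pos hc1]; split_ifs <;> ring
        refine ⟨?_, ?_, ?_⟩
        · intro t ht
          rw [hsh]
          rcases eq_or_ne t j.succ with rfl | htb
          · rw [if_neg (hcs j).symm, if_pos rfl, hji]
            omega
          · rcases eq_or_ne t j.castSucc with rfl | hta
            · rw [if_pos rfl, if_neg htb]; have := hneg _ ht; omega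
            · rw [if_neg hta, if_neg htb]; have := hneg t ht; omega
        · intro t ht
          rw [hsh]
          have hta : t ≠ j.castSucc := by
            intro h'; rw [h'] at ht; simp [Fin.coe_castSucc, hjv] at ht; omega
          have htb : t ≠ j.succ := by
            intro h'; rw [h', hji] at ht; omega
          rw [if_neg hta, if_neg htb]; have := hpos t ht; omega
        · have e1 : ∑ t ∈ univ.filter (fun i : Fin (n + 1) => (i : ℕ) < r), shift j ν t =
              ∑ t ∈ univ.filter (fun i : Fin (n + 1) => (i : ℕ) < r), ν t := by
            rw [Finset.sum_congr rfl (fun t _ => hsh t), sum_ind,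
              if_pos (by simp [Fin.coe_castSucc, hjv]; omega),
              if_pos (by simp [Fin.val_succ, hjv]; omega)]
            ring
          have e2 : ∑ t ∈ univ.filter (fun i : Fin (n + 1) => r ≤ (i : ℕ)), shift j ν t =
              ∑ t ∈ univ.filter (fun i : Fin (n + 1) => r ≤ (i : ℕ)), ν t := by
            rw [Finset.sum_congr rfl (fun t _ => hsh t), sum_ind,
              if_neg (by simp [Fin.coe_castSucc, hjv]; omega),
              if_neg (by simp [Fin.val_succ, hjv]; omega)]
            ring
          rw [e1, e2]; exact hsum
    -- Step 4: ν 0 = -ℓ - 1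
    have hcard : (univ.filter (fun i : Fin (n + 1) => (i : ℕ) < r)).card = r := by
      have h : (univ.filter (fun i : Fin (n + 1) => (i : ℕ) < r)) = Iio ⟨r, by omega⟩ := by
        ext t; simp [Fin.lt_def]
      rw [h, Fin.card_Iio]
    have h0mem : (0 : Fin (n + 1)) ∈ univ.filter (fun i : Fin (n + 1) => (i : ℕ) < r) := by
      simp; omega
    have hplus : ∑ t ∈ univ.filter (fun i : Fin (n + 1) => (i : ℕ) < r), (ν t + 1) =
        ν 0 + 1 := by
      apply Finset.sum_eq_single_of_mem _ h0mem
      intro t ht hne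
      simp only [Finset.mem_filter] at ht
      have ht1 : 1 ≤ (t : ℕ) := by
        rcases Nat.eq_zero_or_pos (t : ℕ) with h' | h'
        · exact absurd (Fin.ext (by simp [h']) : t = 0) hne
        · exact h'
      rw [hone t ht1 ht.2]; ring
    have h0 : ν 0 = -ℓ - 1 := by
      rw [Finset.sum_add_distrib, Finset.sum_const, hcard] at hplus
      simp only [nsmul_eq_mul, mul_one] at hplus
      omega
    funext i
    by_cases hi0 : (i : ℕ) = 0
    · rw [if_pos hi0]
      have : i = 0 := Fin.ext hi0
      rw [this, h0]
    · rw [if_neg hi0]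
      by_cases hir : (i : ℕ) < r
      · rw [if_pos hir]; exact hone i (by omega) hir
      · rw [if_neg hir]; exact hzero i (by omega)
  · rintro rfl
    intro j
    rcases lt_trichotomy ((j : ℕ) + 1) r with hc | hc | hc
    · right
      intro hmem
      have h := ((hS _).mp hmem).1 j.succ (by rw [Fin.val_succ]; omega)
      rw [hshift, if_pos hc, if_neg (hcs j).symm, if_pos rfl] at h
      rw [Fin.val_succ] at h
      rw [if_neg (show ¬((j : ℕ) + 1 = 0) by omega), if_pos hc] at h
      omega
    · left
      rw [hcoeff, if_neg (show ¬((j : ℕ) + 1 < r) by omega), if_pos hc]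
      simp only [Fin.coe_castSucc, Fin.val_succ]
      rw [if_neg (show ¬((j : ℕ) + 1 = 0) by omega),
        if_neg (show ¬((j : ℕ) + 1 < r) by omega), mul_zero]
    · left
      rw [hcoeff, if_neg (show ¬((j : ℕ) + 1 < r) by omega),
        if_neg (show ¬((j : ℕ) + 1 = r) by omega)]
      simp only [Fin.val_succ]
      rw [if_neg (show ¬((j : ℕ) + 1 = 0) by omega),
        if_neg (show ¬((j : ℕ) + 1 < r) by omega)]
end
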